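/- Let λ ∈ ℂ and let A(λ) be the 3-dimensional complex algebra with basis e1,e2,e3 and products e1e1 = e2, e1e2 = e3, e2e1 = λe3. Then every automorphism of A(λ) has matrix [[x,0,0],[y,x²,0],[z,(λ+1)xy,x³]] with x ≠ 0 (i.e., φ(e1) = x e1 + y e2 + z e3, φ(e2) = x² e2 + (λ+1)xy e3, φ(e3) = x³ e3), and conversely every such map is an automorphism. -/
import Mathlib


/-- Basis vectors of ℂ³. -/
noncomputable def e3 (i : Fin 3) : Fin 3 → ℂ := Pi.single i 1

/-- The family of algebras A(λ): e1e1 = e2, e1e2 = e3, e2e1 = λe3. -/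
noncomputable def mulCD304 (l : ℂ) (u v : Fin 3 → ℂ) : Fin 3 → ℂ :=
  Pi.single (1 : Fin 3) (u 0 * v 0) + Pi.single (2 : Fin 3) (u 0 * v 1 + l * (u 1 * v 0))

lemma decomp3 (w : Fin 3 → ℂ) : w = w 0 • e3 0 + w 1 • e3 1 + w 2 • e3 2 := by
  funext i
  fin_cases i <;> simp [e3, Pi.single_apply]

/-- The automorphisms of A(λ) are exactly the maps with matrix
[[x,0,0],[y,x²,0],[z,(λ+1)xy,x³]], x ≠ 0. -/
theorem aut_of_CD304 (l : ℂ) (φ : (Fin 3 → ℂ) ≃ₗ[ℂ] (Fin 3 → ℂ)) :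
    (∀ u v : Fin 3 → ℂ, φ (mulCD304 l u v) = mulCD304 l (φ u) (φ v)) ↔
      ∃ x y z : ℂ, x ≠ 0 ∧
        φ (e3 0) = x • e3 0 + y • e3 1 + z • e3 2 ∧
        φ (e3 1) = (x ^ 2) • e3 1 + ((l + 1) * x * y) • e3 2 ∧
        φ (e3 2) = (x ^ 3) • e3 2 := by
  constructor
  · intro h
    set a := φ (e3 0) with ha
    refine ⟨a 0, a 1, a 2, ?_, ?_, ?_, ?_⟩
    case refine_3 =>
      have he : mulCD304 l (e3 0) (e3 0) = e3 1 := by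
        funext i; fin_cases i <;> simp [mulCD304, e3, Pi.single_apply]
      have := h (e3 0) (e3 0)
      rw [he, ← ha] at this
      rw [this]
      funext i; fin_cases i <;> simp [mulCD304, e3, Pi.single_apply] <;> ring
    case refine_4 =>
      have he : mulCD304 l (e3 0) (e3 1) = e3 2 := by
        funext i; fin_cases i <;> simp [mulCD304, e3, Pi.single_apply]
      have h2 := h (e3 0) (e3 1)
      rw [he, ← ha] at h2
      have he1 : mulCD304 l (e3 0) (e3 0) = e3 1 := by
        funext i; fin_cases i <;> simp [mulCD304, e3, Pi.single_apply]
      have h1 := h (e3 0) (e3 0)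
      rw [he1, ← ha] at h1
      rw [h2, h1]
      funext i; fin_cases i <;> simp [mulCD304, e3, Pi.single_apply] <;> ring
    case refine_2 => exact decomp3 a
    case refine_1 =>
      -- x ≠ 0
      intro hx
      have he : mulCD304 l (e3 0) (e3 1) = e3 2 := by
        funext i; fin_cases i <;> simp [mulCD304, e3, Pi.single_apply]
      have h2 := h (e3 0) (e3 1)
      rw [he, ← ha] at h2
      have h1 := h (e3 0) (e3 0)
      have he1 : mulCD304 l (e3 0) (e3 0) = e3 1 := by
        funext i; fin_cases i <;> simp [mulCD304, e3, Pi.single_apply]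
      rw [he1, ← ha] at h1
      have hz : φ (e3 2) = 0 := by
        rw [h2, h1]
        funext i; fin_cases i <;> simp [mulCD304, e3, Pi.single_apply, hx]
      have : (e3 2 : Fin 3 → ℂ) = 0 := φ.injective (by simp [hz])
      have := congrFun this 2
      simp [e3, Pi.single_apply] at this
  · rintro ⟨x, y, z, hx, h1, h2, h3⟩ u v
    have key : ∀ w : Fin 3 → ℂ, φ w = (x * w 0) • e3 0 + (y * w 0 + x ^ 2 * w 1) • e3 1
        + (z * w 0 + (l + 1) * x * y * w 1 + x ^ 3 * w 2) • e3 2 := by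
      intro w
      conv_lhs => rw [decomp3 w]
      rw [map_add, map_add, map_smul, map_smul, map_smul, h1, h2, h3]
      funext i; fin_cases i <;> simp [e3, Pi.single_apply] <;> ring
    rw [key, key u, key v]
    funext i; fin_cases i <;> simp [mulCD304, e3, Pi.single_apply] <;> ring
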